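/- Let r ≥ 1 be an integer. The family of matrices { ad_f^J(L_i) : 1 ≤ i ≤ r, 0 ≤ J ≤ i−1 } is linearly independent and its linear span equals the space of all upper-triangular r×r complex matrices (matrices A with A_{ab} = 0 whenever a > b). In particular this family has r(r+1)/2 elements and forms a basis of the upper-triangular matrices. -/
import Mathlib


open Matrix

/-- The nilpotent element `f = Σ_{i=1}^{r−1} i(r−i) ε_{i+1,i}` (0-based indexing). -/
noncomputable def fMat (r : ℕ) : Matrix (Fin r) (Fin r) ℂ :=
  Matrix.of fun a b =>
    if (b : ℕ) + 1 = (a : ℕ) then (((b : ℕ) : ℂ) + 1) * ((r : ℂ) - (((b : ℕ) : ℂ) + 1)) else 0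

/-- `L_i = Σ_{k=1}^{r−i+1} ε_{k,i−1+k}` (1-based `i`). -/
noncomputable def LMat (r i : ℕ) : Matrix (Fin r) (Fin r) ℂ :=
  Matrix.of fun a b => if (b : ℕ) = (a : ℕ) + (i - 1) then 1 else 0

/-- `ad_X(Y) = [X, Y] = XY − YX`. -/
noncomputable def adM {r : ℕ} (X : Matrix (Fin r) (Fin r) ℂ) :
    Matrix (Fin r) (Fin r) ℂ → Matrix (Fin r) (Fin r) ℂ :=
  fun Y => X * Y - Y * X

/-- The family `ad_f^J(L_i)`, `1 ≤ i ≤ r`, `0 ≤ J ≤ i−1`, indexed by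
the sigma type `Σ i : Fin r, Fin (i+1)` (with `i` shifted by one). -/
noncomputable def adfLFamily (r : ℕ) (p : Σ i : Fin r, Fin ((i : ℕ) + 1)) :
    Matrix (Fin r) (Fin r) ℂ :=
  (adM (fMat r))^[(p.2 : ℕ)] (LMat r ((p.1 : ℕ) + 1))

namespace AdfL

variable (r : ℕ)

/-- entry of a matrix, with ℕ indices, extended by zero -/
noncomputable def ent (M : Matrix (Fin r) (Fin r) ℂ) (a b : ℕ) : ℂ :=
  if h : a < r ∧ b < r then M ⟨a, h.1⟩ ⟨b, h.2⟩ else 0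

lemma ent_apply (M : Matrix (Fin r) (Fin r) ℂ) (a b : Fin r) :
    ent r M a b = M a b := by
  simp [ent, a.isLt, b.isLt]

lemma ent_of_ge_left (M : Matrix (Fin r) (Fin r) ℂ) {a : ℕ} (b : ℕ) (h : r ≤ a) :
    ent r M a b = 0 := by
  simp only [ent, dite_eq_right_iff]
  intro hh; omega

lemma ent_of_ge_right (M : Matrix (Fin r) (Fin r) ℂ) (a : ℕ) {b : ℕ} (h : r ≤ b) :
    ent r M a b = 0 := by
  simp only [ent, dite_eq_right_iff]
  intro hh; omega

lemma ent_add (M N : Matrix (Fin r) (Fin r) ℂ) (a b : ℕ) :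
    ent r (M + N) a b = ent r M a b + ent r N a b := by
  unfold ent; split <;> simp [Matrix.add_apply]

lemma ent_smul (c : ℂ) (M : Matrix (Fin r) (Fin r) ℂ) (a b : ℕ) :
    ent r (c • M) a b = c * ent r M a b := by
  unfold ent; split <;> simp [Matrix.smul_apply]

/-- coefficient `c(k) = k (r-k)` as a natural number -/
def cN (k : ℕ) : ℕ := k * (r - k)

lemma cN_cast {k : ℕ} (hk : k ≤ r) : (cN r k : ℂ) = (k : ℂ) * ((r : ℂ) - (k : ℂ)) := by
  have : ((r - k : ℕ) : ℂ) = (r : ℂ) - (k : ℂ) := by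
    push_cast [Nat.cast_sub hk]; ring
  simp [cN, this]

lemma cN_pos {k : ℕ} (h1 : 1 ≤ k) (h2 : k ≤ r - 1) : 0 < cN r k := by
  have : k < r := by omega
  exact Nat.mul_pos h1 (by omega)

lemma fmul_ent (M : Matrix (Fin r) (Fin r) ℂ) (a b : ℕ) :
    ent r (fMat r * M) a b = (a : ℂ) * ((r : ℂ) - (a : ℂ)) * ent r M (a - 1) b := by
  by_cases hab : a < r ∧ b < r
  · obtain ⟨ha, hb⟩ := hab
    rw [show ent r (fMat r * M) a b = (fMat r * M) ⟨a, ha⟩ ⟨b, hb⟩ from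
      ent_apply r _ ⟨a, ha⟩ ⟨b, hb⟩]
    rw [Matrix.mul_apply]
    rcases Nat.eq_zero_or_pos a with h0 | h0
    · subst h0
      rw [Finset.sum_eq_zero]
      · simp
      · intro k _
        have : ¬ ((k : ℕ) + 1 = (0 : ℕ)) := by omega
        simp [fMat, this]
    · have ha1 : a - 1 < r := by omega
      rw [Finset.sum_eq_single (⟨a - 1, ha1⟩ : Fin r)]
      · have : ((⟨a - 1, ha1⟩ : Fin r) : ℕ) + 1 = a := by simp; omega
        simp only [fMat, Matrix.of_apply, this, if_pos rfl, if_true, eq_self_iff_true]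
        rw [show ent r M (a-1) b = M ⟨a-1, ha1⟩ ⟨b, hb⟩ from ent_apply r M ⟨a-1,ha1⟩ ⟨b,hb⟩]
        have hc : ((a - 1 : ℕ) : ℂ) + 1 = (a : ℂ) := by
          have : ((a - 1 : ℕ) : ℂ) = (a : ℂ) - 1 := by
            push_cast [Nat.cast_sub (by omega : 1 ≤ a)]; ring
          rw [this]; ring
        rw [hc]
      · intro k _ hk
        have : ¬ ((k : ℕ) + 1 = a) := by
          intro hh
          apply hk
          apply Fin.ext
          simp; omega
        simp [fMat, this]
      · intro h; exact absurd (Finset.mem_univ _) h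
  · push_neg at hab
    rcases Nat.lt_or_ge a r with ha | ha
    · have hb : r ≤ b := hab ha
      rw [ent_of_ge_right r _ _ hb, ent_of_ge_right r _ _ hb, mul_zero]
    · rw [ent_of_ge_left r _ _ ha]
      rcases Nat.eq_or_lt_of_le ha with h | h
      · rw [← h]; simp
      · rw [ent_of_ge_left r _ _ (by omega : r ≤ a - 1), mul_zero]

lemma mulf_ent (M : Matrix (Fin r) (Fin r) ℂ) (a b : ℕ) :
    ent r (M * fMat r) a b = ((b : ℂ) + 1) * ((r : ℂ) - ((b : ℂ) + 1)) * ent r M a (b + 1) := by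
  by_cases hab : a < r ∧ b < r
  · obtain ⟨ha, hb⟩ := hab
    rw [show ent r (M * fMat r) a b = (M * fMat r) ⟨a, ha⟩ ⟨b, hb⟩ from
      ent_apply r _ ⟨a, ha⟩ ⟨b, hb⟩]
    rw [Matrix.mul_apply]
    rcases Nat.lt_or_ge (b + 1) r with hb1 | hb1
    · rw [Finset.sum_eq_single (⟨b + 1, hb1⟩ : Fin r)]
      · simp only [fMat, Matrix.of_apply]
        rw [if_pos (by simp)]
        rw [show ent r M a (b+1) = M ⟨a, ha⟩ ⟨b+1, hb1⟩ from ent_apply r M ⟨a,ha⟩ ⟨b+1,hb1⟩]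
        push_cast
        ring
      · intro k _ hk
        have : ¬ ((b : ℕ) + 1 = (k : ℕ)) := by
          intro hh
          exact hk (Fin.ext (by simp [← hh]))
        simp [fMat, this]
      · intro h; exact absurd (Finset.mem_univ _) h
    · rw [ent_of_ge_right r _ _ hb1, mul_zero]
      rw [Finset.sum_eq_zero]
      intro k _
      have : ¬ ((b : ℕ) + 1 = (k : ℕ)) := by omega
      simp [fMat, this]
  · push_neg at hab
    rcases Nat.lt_or_ge a r with ha | ha
    · have hb : r ≤ b := hab ha
      rw [ent_of_ge_right r _ _ hb, ent_of_ge_right r _ _ (by omega : r ≤ b + 1), mul_zero]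
    · rw [ent_of_ge_left r _ _ ha, ent_of_ge_left r _ _ ha, mul_zero]

lemma adM_ent (M : Matrix (Fin r) (Fin r) ℂ) (a b : ℕ) :
    ent r (adM (fMat r) M) a b =
      (a : ℂ) * ((r : ℂ) - (a : ℂ)) * ent r M (a - 1) b
      - ((b : ℂ) + 1) * ((r : ℂ) - ((b : ℂ) + 1)) * ent r M a (b + 1) := by
  have : adM (fMat r) M = fMat r * M + (-1 : ℂ) • (M * fMat r) := by
    unfold adM; rw [neg_one_smul, sub_eq_add_neg]
  rw [this, ent_add, ent_smul, fmul_ent, mulf_ent]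
  ring

/-- The submodule of matrices supported on the `d`-th (upper) diagonal. -/
noncomputable def Dg (d : ℕ) : Submodule ℂ (Matrix (Fin r) (Fin r) ℂ) where
  carrier := {M | ∀ a b : Fin r, (b : ℕ) ≠ (a : ℕ) + d → M a b = 0}
  add_mem' := by
    intro M N hM hN a b hab
    simp [Matrix.add_apply, hM a b hab, hN a b hab]
  zero_mem' := by intro a b _; rfl
  smul_mem' := by
    intro c M hM a b hab
    simp [Matrix.smul_apply, hM a b hab]

lemma ent_eq_zero_of_mem {d : ℕ} {M : Matrix (Fin r) (Fin r) ℂ} (hM : M ∈ Dg r d)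
    {a b : ℕ} (hab : b ≠ a + d) : ent r M a b = 0 := by
  unfold ent
  split
  · next h => exact hM ⟨a, h.1⟩ ⟨b, h.2⟩ hab
  · rfl

lemma mem_Dg_of_ent {d : ℕ} {M : Matrix (Fin r) (Fin r) ℂ}
    (h : ∀ a b : ℕ, b ≠ a + d → ent r M a b = 0) : M ∈ Dg r d := by
  intro a b hab
  have := h a b hab
  rwa [ent_apply] at this

lemma LMat_mem_Dg (d : ℕ) : LMat r (d + 1) ∈ Dg r d := by
  intro a b hab
  simp only [LMat, Matrix.of_apply, Nat.add_sub_cancel]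
  rw [if_neg hab]

lemma adM_mem_Dg {d : ℕ} {M : Matrix (Fin r) (Fin r) ℂ} (hM : M ∈ Dg r (d + 1)) :
    adM (fMat r) M ∈ Dg r d := by
  apply mem_Dg_of_ent
  intro a b hab
  rw [adM_ent]
  rcases Nat.eq_zero_or_pos a with h0 | h0
  · subst h0
    have h2 : ent r M 0 (b + 1) = 0 := ent_eq_zero_of_mem r hM (by omega)
    simp [h2]
  · have h1 : ent r M (a - 1) b = 0 := ent_eq_zero_of_mem r hM (by omega)
    have h2 : ent r M a (b + 1) = 0 := ent_eq_zero_of_mem r hM (by omega)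
    simp [h1, h2]

/-- `Fam d J = ad_f^J (L_{d+1+J})`, the family member on diagonal `d`. -/
noncomputable def Fam (d J : ℕ) : Matrix (Fin r) (Fin r) ℂ :=
  (adM (fMat r))^[J] (LMat r (d + 1 + J))

lemma Fam_succ (d J : ℕ) : Fam r d (J + 1) = adM (fMat r) (Fam r (d + 1) J) := by
  unfold Fam
  have h : d + 1 + (J + 1) = (d + 1) + 1 + J := by omega
  rw [h, Function.iterate_succ_apply']

lemma Fam_mem_Dg : ∀ J d, Fam r d J ∈ Dg r d := by
  intro J
  induction J with
  | zero => intro d; exact LMat_mem_Dg r d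
  | succ J ih =>
    intro d
    rw [Fam_succ]
    exact adM_mem_Dg r (ih (d + 1))

lemma cast_ne_zero_coeff {k : ℕ} (h1 : 1 ≤ k) (h2 : k < r) :
    (k : ℂ) * ((r : ℂ) - (k : ℂ)) ≠ 0 := by
  rw [← cN_cast r (le_of_lt h2)]
  have := cN_pos r h1 (by omega)
  exact_mod_cast Nat.pos_iff_ne_zero.mp this

/-- injectivity of `ad_f` on the `e`-th diagonal, `e ≥ 1` -/
lemma adM_inj_on_Dg {e : ℕ} (he : 1 ≤ e) {M : Matrix (Fin r) (Fin r) ℂ}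
    (hM : M ∈ Dg r e) (h0 : adM (fMat r) M = 0) : M = 0 := by
  have key : ∀ a : ℕ, ent r M a (a + e) = 0 := by
    intro a
    induction a using Nat.strong_induction_on with
    | _ a ih =>
      rcases Nat.lt_or_ge (a + e) r with hlt | hge
      · have hz : ent r (adM (fMat r) M) a (a + e - 1) = 0 := by
          rw [h0]; unfold ent; split <;> simp
        rw [adM_ent] at hz
        have hfirst : (a : ℂ) * ((r : ℂ) - (a : ℂ)) * ent r M (a - 1) (a + e - 1) = 0 := by
          rcases Nat.eq_zero_or_pos a with h00 | h00
          · subst h00; simp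
          · have : a + e - 1 = (a - 1) + e := by omega
            rw [this, ih (a - 1) (by omega)]
            ring
        rw [hfirst, zero_sub, neg_eq_zero] at hz
        have hco : ((↑(a + e - 1) : ℂ) + 1) * ((r : ℂ) - ((↑(a + e - 1) : ℂ) + 1)) ≠ 0 := by
          have h1 : ((↑(a + e - 1) : ℂ) + 1) = ((a + e : ℕ) : ℂ) := by
            have : (a + e - 1) + 1 = a + e := by omega
            rw [← this]; push_cast; ring
          rw [h1]
          exact cast_ne_zero_coeff r (by omega) hlt
        have h2 : (a + e - 1) + 1 = a + e := by omega
        rw [h2] at hz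
        exact (mul_eq_zero.mp hz).resolve_left hco
      · exact ent_of_ge_right r M a hge
  ext a b
  rcases eq_or_ne (b : ℕ) ((a : ℕ) + e) with hb | hb
  · have := key (a : ℕ)
    rw [← hb] at this
    rw [ent_apply] at this
    simpa using this
  · simpa using hM a b hb

/-- entry as a linear functional -/
noncomputable def entL (a b : ℕ) : Matrix (Fin r) (Fin r) ℂ →ₗ[ℂ] ℂ where
  toFun M := ent r M a b
  map_add' M N := ent_add r M N a b
  map_smul' c M := ent_smul r c M a b

@[simp] lemma entL_apply (a b : ℕ) (M : Matrix (Fin r) (Fin r) ℂ) :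
    entL r a b M = ent r M a b := rfl

/-- `ad_f` as a linear map -/
noncomputable def adL : Matrix (Fin r) (Fin r) ℂ →ₗ[ℂ] Matrix (Fin r) (Fin r) ℂ :=
  LinearMap.mulLeft ℂ (fMat r) - LinearMap.mulRight ℂ (fMat r)

@[simp] lemma adL_apply (M : Matrix (Fin r) (Fin r) ℂ) : adL r M = adM (fMat r) M := by
  simp [adL, adM, LinearMap.sub_apply]

/-- positive integer weights for the functional detecting `L_{d+1}` -/
def w (d a : ℕ) : ℕ :=
  (∏ k ∈ Finset.Ico 1 (a + 1), cN r (k + d)) * ∏ k ∈ Finset.Ico (a + 1) (r - d), cN r k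

lemma w_pos {d a : ℕ} (h : a + d < r) : 0 < w r d a := by
  apply Nat.mul_pos
  · apply Finset.prod_pos
    intro k hk
    rw [Finset.mem_Ico] at hk
    exact cN_pos r (by omega) (by omega)
  · apply Finset.prod_pos
    intro k hk
    rw [Finset.mem_Ico] at hk
    exact cN_pos r (by omega) (by omega)

lemma w_rec {d a : ℕ} (h : a + d + 1 < r) :
    w r d (a + 1) * cN r (a + 1) = w r d a * cN r (a + d + 1) := by
  unfold w
  rw [Finset.prod_Ico_succ_top (by omega : 1 ≤ a + 1),
    Finset.prod_eq_prod_Ico_succ_bot (by omega : a + 1 < r - d) (cN r)]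
  have h1 : a + 1 + d = a + d + 1 := by omega
  rw [h1]
  ring

/-- the functional `φ_d` -/
noncomputable def phi (d : ℕ) : Matrix (Fin r) (Fin r) ℂ →ₗ[ℂ] ℂ :=
  ∑ a ∈ Finset.range r, (w r d a : ℂ) • entL r a (a + d)

lemma phi_apply (d : ℕ) (M : Matrix (Fin r) (Fin r) ℂ) :
    phi r d M = ∑ a ∈ Finset.range r, (w r d a : ℂ) * ent r M a (a + d) := by
  simp [phi, LinearMap.sum_apply, LinearMap.smul_apply]

lemma phi_adM (d : ℕ) (M : Matrix (Fin r) (Fin r) ℂ) :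
    phi r d (adM (fMat r) M) = 0 := by
  rcases Nat.eq_zero_or_pos r with h0 | h0
  · subst h0
    rw [phi_apply]
    simp
  obtain ⟨n, rfl⟩ : ∃ n, r = n + 1 := ⟨r - 1, by omega⟩
  rw [phi_apply]
  have hsplit : ∀ a : ℕ, (w (n+1) d a : ℂ) * ent (n+1) (adM (fMat (n+1)) M) a (a + d)
      = (w (n+1) d a : ℂ) * ((a : ℂ) * (((n+1 : ℕ) : ℂ) - (a : ℂ)) * ent (n+1) M (a-1) (a+d))
        - (w (n+1) d a : ℂ) * ((((a+d : ℕ) : ℂ) + 1) * (((n+1 : ℕ) : ℂ) - (((a+d : ℕ) : ℂ) + 1))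
            * ent (n+1) M a (a+d+1)) := by
    intro a
    rw [adM_ent]
    ring
  rw [Finset.sum_congr rfl (fun a _ => hsplit a), Finset.sum_sub_distrib]
  rw [Finset.sum_range_succ', Finset.sum_range_succ]
  have hA0 : (w (n+1) d 0 : ℂ) * ((0 : ℕ) * (((n+1 : ℕ) : ℂ) - ((0:ℕ) : ℂ))
      * ent (n+1) M (0-1) (0+d)) = 0 := by
    norm_num
  rw [hA0, add_zero]
  have hBn : (w (n+1) d n : ℂ) * ((((n+d : ℕ) : ℂ) + 1) * (((n+1 : ℕ) : ℂ) - (((n+d : ℕ) : ℂ) + 1))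
      * ent (n+1) M n (n+d+1)) = 0 := by
    rw [ent_of_ge_right _ _ _ (by omega)]
    ring
  rw [hBn, add_zero, sub_eq_zero]
  apply Finset.sum_congr rfl
  intro a ha
  rw [Finset.mem_range] at ha
  have e1 : a + 1 - 1 = a := by omega
  have e2 : a + 1 + d = a + d + 1 := by omega
  rw [e1, e2]
  rcases Nat.lt_or_ge (a + d + 1) (n + 1) with hc | hc
  · have hw := congrArg (Nat.cast : ℕ → ℂ) (w_rec (n+1) hc)
    rw [Nat.cast_mul, Nat.cast_mul, cN_cast _ (by omega), cN_cast _ (by omega)] at hw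
    have hc1 : ((a + d : ℕ) : ℂ) + 1 = ((a + d + 1 : ℕ) : ℂ) := by push_cast; ring
    rw [hc1]
    linear_combination (ent (n+1) M a (a+d+1)) * hw
  · rw [ent_of_ge_right _ _ _ (by omega : n + 1 ≤ a + d + 1)]
    ring

lemma phi_LMat {d : ℕ} (hd : d < r) : phi r d (LMat r (d+1)) ≠ 0 := by
  rw [phi_apply]
  have hent : ∀ a, a < r → ent r (LMat r (d+1)) a (a+d) = if a + d < r then 1 else 0 := by
    intro a ha
    unfold ent
    split
    · next h =>
      rw [if_pos h.2]
      simp [LMat]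
    · next h =>
      rw [if_neg (by omega : ¬ a + d < r)]
  have hcast : (∑ a ∈ Finset.range r, (w r d a : ℂ) * ent r (LMat r (d+1)) a (a+d))
       = ((∑ a ∈ Finset.range r, if a + d < r then w r d a else 0 : ℕ) : ℂ) := by
    push_cast
    apply Finset.sum_congr rfl
    intro a ha
    rw [Finset.mem_range] at ha
    rw [hent a ha]
    split <;> simp
  rw [hcast, Nat.cast_ne_zero]
  have h00 : 0 + d < r := by omega
  have h0 : 0 < (if 0 + d < r then w r d 0 else 0) := by
    rw [if_pos h00]; exact w_pos r h00
  have hle := Finset.single_le_sum (f := fun a => if a + d < r then w r d a else 0)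
    (fun i _ => Nat.zero_le _) (Finset.mem_range.mpr (by omega : 0 < r))
  omega

/-- linear independence of the family members on diagonal `d` -/
lemma indep_diag : ∀ n d, d + n = r → LinearIndependent ℂ (fun J : Fin n => Fam r d (J : ℕ)) := by
  intro n
  induction n with
  | zero => intro d _; exact linearIndependent_empty_type
  | succ n ih =>
    intro d hdn
    have hfam : (fun J : Fin (n+1) => Fam r d (J : ℕ))
        = Fin.cons (Fam r d 0) (fun J : Fin n => Fam r d ((J : ℕ) + 1)) := by
      funext J
      refine Fin.cases ?_ ?_ J
      · simp
      · intro k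
        simp
    rw [hfam, linearIndependent_fin_cons]
    constructor
    · have htail : (fun J : Fin n => Fam r d ((J : ℕ) + 1))
          = (adL r) ∘ (fun J : Fin n => Fam r (d + 1) (J : ℕ)) := by
        funext J
        simp [Fam_succ]
      rw [htail]
      apply LinearIndependent.map (ih (d + 1) (by omega))
      have hspan : Submodule.span ℂ (Set.range fun J : Fin n => Fam r (d + 1) (J : ℕ))
          ≤ Dg r (d + 1) := by
        rw [Submodule.span_le]
        rintro x ⟨J, rfl⟩
        exact Fam_mem_Dg r (J : ℕ) (d + 1)
      apply Disjoint.mono_left hspan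
      rw [Submodule.disjoint_def]
      intro x hx hker
      have hz : adM (fMat r) x = 0 := by
        rw [← adL_apply]
        exact LinearMap.mem_ker.mp hker
      exact adM_inj_on_Dg r (by omega) hx hz
    · intro hmem
      have hL : Fam r d 0 = LMat r (d + 1) := by unfold Fam; rfl
      have hker : Submodule.span ℂ (Set.range fun J : Fin n => Fam r d ((J : ℕ) + 1))
          ≤ LinearMap.ker (phi r d) := by
        rw [Submodule.span_le]
        rintro x ⟨J, rfl⟩
        rw [SetLike.mem_coe, LinearMap.mem_ker]
        show phi r d (Fam r d ((J : ℕ) + 1)) = 0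
        rw [Fam_succ]
        exact phi_adM r d _
      have := hker hmem
      rw [LinearMap.mem_ker, hL] at this
      exact phi_LMat r (by omega) this

/-- matrices vanishing on the `d`-th diagonal -/
noncomputable def Eg (d : ℕ) : Submodule ℂ (Matrix (Fin r) (Fin r) ℂ) where
  carrier := {M | ∀ a b : Fin r, (b : ℕ) = (a : ℕ) + d → M a b = 0}
  add_mem' := by
    intro M N hM hN a b hab
    simp [Matrix.add_apply, hM a b hab, hN a b hab]
  zero_mem' := by intro a b _; rfl
  smul_mem' := by
    intro c M hM a b hab
    simp [Matrix.smul_apply, hM a b hab]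

lemma Dg_le_Eg {d e : ℕ} (h : d ≠ e) : Dg r d ≤ Eg r e := by
  intro M hM a b hab
  exact hM a b (by omega)

lemma disjoint_Dg_Eg (d : ℕ) : Disjoint (Dg r d) (Eg r d) := by
  rw [Submodule.disjoint_def]
  intro M h1 h2
  ext a b
  rcases eq_or_ne ((b : ℕ)) ((a : ℕ) + d) with hb | hb
  · simpa using h2 a b hb
  · simpa using h1 a b hb

/-- the sigma-indexed family grouped by diagonals -/
lemma indep_G :
    LinearIndependent ℂ (fun p : Σ d : Fin r, Fin (r - (d : ℕ)) => Fam r (p.1 : ℕ) (p.2 : ℕ)) := by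
  apply linearIndependent_iUnion_finite
    (f := fun (d : Fin r) (J : Fin (r - (d : ℕ))) => Fam r (d : ℕ) (J : ℕ))
  · intro d
    exact indep_diag r (r - (d : ℕ)) (d : ℕ) (by omega)
  · intro i t _ hit
    have h1 : Submodule.span ℂ (Set.range fun J : Fin (r - (i : ℕ)) => Fam r (i : ℕ) (J : ℕ))
        ≤ Dg r (i : ℕ) := by
      rw [Submodule.span_le]
      rintro x ⟨J, rfl⟩
      exact Fam_mem_Dg r _ _
    have h2 : (⨆ j ∈ t, Submodule.span ℂ
          (Set.range fun J : Fin (r - (j : Fin r) : ℕ) => Fam r ((j : Fin r) : ℕ) (J : ℕ)))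
        ≤ Eg r (i : ℕ) := by
      apply iSup₂_le
      intro j hj
      rw [Submodule.span_le]
      rintro x ⟨J, rfl⟩
      have hji : (j : ℕ) ≠ (i : ℕ) := by
        intro hh
        exact hit (by rwa [show j = i from Fin.ext hh] at hj)
      exact Dg_le_Eg r hji (Fam_mem_Dg r _ _)
    exact Disjoint.mono h1 h2 (disjoint_Dg_Eg r (i : ℕ))

/-- parametrization of the `d`-th diagonal -/
noncomputable def iota (d : ℕ) : (Fin (r - d) → ℂ) →ₗ[ℂ] Matrix (Fin r) (Fin r) ℂ where
  toFun v := Matrix.of fun a b =>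
    if h : (b : ℕ) = (a : ℕ) + d then v ⟨(a : ℕ), by omega⟩ else 0
  map_add' v u := by
    ext a b
    by_cases h : (b : ℕ) = (a : ℕ) + d <;> simp [h]
  map_smul' c v := by
    ext a b
    by_cases h : (b : ℕ) = (a : ℕ) + d <;> simp [h]

lemma iota_inj (d : ℕ) : Function.Injective (iota r d) := by
  rw [← LinearMap.ker_eq_bot]
  rw [LinearMap.ker_eq_bot']
  intro v hv
  funext k
  have hk1 : (k : ℕ) < r := by omega
  have hk2 : (k : ℕ) + d < r := by omega
  have h2 := congrFun (congrFun hv (⟨(k : ℕ), hk1⟩ : Fin r)) (⟨(k : ℕ) + d, hk2⟩ : Fin r)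
  simp only [iota, LinearMap.coe_mk, AddHom.coe_mk, Matrix.of_apply] at h2
  simp only [dite_true] at h2
  simpa using h2

lemma range_iota (d : ℕ) : LinearMap.range (iota r d) = Dg r d := by
  apply le_antisymm
  · rintro x ⟨v, rfl⟩
    intro a b hab
    simp only [iota, LinearMap.coe_mk, AddHom.coe_mk, Matrix.of_apply]
    rw [dif_neg hab]
  · intro M hM
    refine ⟨fun k => M ⟨(k : ℕ), by omega⟩ ⟨(k : ℕ) + d, by omega⟩, ?_⟩
    ext a b
    simp only [iota, LinearMap.coe_mk, AddHom.coe_mk, Matrix.of_apply]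
    split
    · next h =>
      congr 1 <;> apply Fin.ext <;> simp [h]
    · next h =>
      exact (hM a b h).symm

lemma finrank_Dg (d : ℕ) : Module.finrank ℂ (Dg r d) = r - d := by
  rw [← range_iota, LinearMap.finrank_range_of_inj (iota_inj r d), Module.finrank_fin_fun]

lemma span_Fam_eq (d : ℕ) (hd : d + (r - d) = r) :
    Submodule.span ℂ (Set.range fun J : Fin (r - d) => Fam r d (J : ℕ)) = Dg r d := by
  apply Submodule.eq_of_le_of_finrank_le
  · rw [Submodule.span_le]
    rintro x ⟨J, rfl⟩
    exact Fam_mem_Dg r _ _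
  · rw [finrank_Dg, finrank_span_eq_card (indep_diag r (r - d) d hd)]
    simp

/-- the upper-triangular submodule -/
noncomputable def Ug : Submodule ℂ (Matrix (Fin r) (Fin r) ℂ) where
  carrier := {A | ∀ a b : Fin r, (b : ℕ) < (a : ℕ) → A a b = 0}
  add_mem' := by
    intro M N hM hN a b hab
    simp [Matrix.add_apply, hM a b hab, hN a b hab]
  zero_mem' := by intro a b _; rfl
  smul_mem' := by
    intro c M hM a b hab
    simp [Matrix.smul_apply, hM a b hab]

lemma Dg_le_Ug (d : ℕ) : Dg r d ≤ Ug r := by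
  intro M hM a b hab
  exact hM a b (by omega)

lemma Ug_le_iSup : Ug r ≤ ⨆ d : Fin r, Dg r (d : ℕ) := by
  intro M hM
  have hdecomp : M = ∑ d ∈ Finset.range r,
      Matrix.of (fun a b : Fin r => if (b : ℕ) = (a : ℕ) + d then M a b else 0) := by
    ext a b
    rw [Matrix.sum_apply]
    rcases Nat.lt_or_ge ((b : ℕ)) ((a : ℕ)) with hab | hab
    · rw [hM a b hab, Finset.sum_eq_zero]
      intro d _
      simp only [Matrix.of_apply]
      rw [if_neg (by omega)]
    · rw [Finset.sum_eq_single ((b : ℕ) - (a : ℕ))]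
      · simp only [Matrix.of_apply]
        rw [if_pos (by omega)]
      · intro d _ hd
        simp only [Matrix.of_apply]
        rw [if_neg (by omega)]
      · intro hmem
        exact absurd (Finset.mem_range.mpr (by omega)) hmem
  rw [hdecomp]
  apply Submodule.sum_mem
  intro d hd
  rw [Finset.mem_range] at hd
  apply Submodule.mem_iSup_of_mem (⟨d, hd⟩ : Fin r)
  intro a b hab
  simp only [Matrix.of_apply]
  rw [if_neg hab]

/-- re-indexing of the sigma type -/
def eIdx (p : Σ i : Fin r, Fin ((i : ℕ) + 1)) : Σ d : Fin r, Fin (r - (d : ℕ)) :=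
  ⟨⟨(p.1 : ℕ) - (p.2 : ℕ), by have := p.1.isLt; omega⟩,
   ⟨(p.2 : ℕ), by have := p.1.isLt; have := p.2.isLt; simp; omega⟩⟩

lemma eIdx_inj : Function.Injective (eIdx r) := by
  rintro ⟨⟨i1, hi1⟩, ⟨J1, hJ1⟩⟩ ⟨⟨i2, hi2⟩, ⟨J2, hJ2⟩⟩ h
  simp only [eIdx] at h
  obtain ⟨ha, hb⟩ := Sigma.mk.inj_iff.mp h
  have h1 : i1 - J1 = i2 - J2 := by
    simpa using congrArg Fin.val ha
  have h2 : J1 = J2 := by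
    simpa using (Fin.heq_ext_iff (by rw [h1])).mp hb
  have hb1 : J1 < i1 + 1 := hJ1
  have hb2 : J2 < i2 + 1 := hJ2
  have hi : i1 = i2 := by omega
  subst hi
  subst h2
  rfl

lemma adfL_eq_comp :
    adfLFamily r = (fun p : Σ d : Fin r, Fin (r - (d : ℕ)) => Fam r (p.1 : ℕ) (p.2 : ℕ))
      ∘ eIdx r := by
  funext p
  show adfLFamily r p = Fam r ((p.1 : ℕ) - (p.2 : ℕ)) (p.2 : ℕ)
  unfold adfLFamily Fam
  have h := p.2.isLt
  have harg : (p.1 : ℕ) - (p.2 : ℕ) + 1 + (p.2 : ℕ) = (p.1 : ℕ) + 1 := by omega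
  rw [harg]

lemma range_eq : Set.range (adfLFamily r)
    = Set.range (fun p : Σ d : Fin r, Fin (r - (d : ℕ)) => Fam r (p.1 : ℕ) (p.2 : ℕ)) := by
  apply le_antisymm
  · rw [adfL_eq_comp]
    exact Set.range_comp_subset_range _ _
  · rintro x ⟨⟨d, J⟩, rfl⟩
    have hd : (d : ℕ) < r := d.isLt
    have hJ : (J : ℕ) < r - (d : ℕ) := J.isLt
    refine ⟨⟨⟨(d : ℕ) + (J : ℕ), by omega⟩, ⟨(J : ℕ), by simp only [Fin.val_mk]; omega⟩⟩, ?_⟩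
    show (adM (fMat r))^[(J : ℕ)] (LMat r ((d : ℕ) + (J : ℕ) + 1)) = Fam r (d : ℕ) (J : ℕ)
    unfold Fam
    have harg : (d : ℕ) + (J : ℕ) + 1 = (d : ℕ) + 1 + (J : ℕ) := by omega
    rw [harg]

end AdfL

/-- the family `{ad_f^J(L_i)}` is linearly independent, spans
exactly the upper-triangular matrices, and has `r(r+1)/2` elements. -/
theorem adf_L_basis_upper_triangular (r : ℕ) (hr : 1 ≤ r) :
    LinearIndependent ℂ (adfLFamily r) ∧
    ↑(Submodule.span ℂ (Set.range (adfLFamily r))) =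
      {A : Matrix (Fin r) (Fin r) ℂ | ∀ a b : Fin r, (b : ℕ) < (a : ℕ) → A a b = 0} ∧
    Fintype.card (Σ i : Fin r, Fin ((i : ℕ) + 1)) = r * (r + 1) / 2 := by
  refine ⟨?_, ?_, ?_⟩
  · rw [AdfL.adfL_eq_comp r]
    exact (AdfL.indep_G r).comp _ (AdfL.eIdx_inj r)
  · have hspan : Submodule.span ℂ (Set.range (adfLFamily r)) = AdfL.Ug r := by
      rw [AdfL.range_eq r, Set.range_sigma_eq_iUnion_range, Submodule.span_iUnion]
      apply le_antisymm
      · apply iSup_le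
        intro d
        rw [AdfL.span_Fam_eq r (d : ℕ) (by have := d.isLt; omega)]
        exact AdfL.Dg_le_Ug r (d : ℕ)
      · refine le_trans (AdfL.Ug_le_iSup r) ?_
        apply iSup_mono
        intro d
        rw [AdfL.span_Fam_eq r (d : ℕ) (by have := d.isLt; omega)]
    rw [hspan]
    rfl
  · have h1 : Fintype.card (Σ i : Fin r, Fin ((i : ℕ) + 1)) = ∑ i ∈ Finset.range r, (i + 1) := by
      rw [Fintype.card_sigma]
      simp [Fin.sum_univ_eq_sum_range (fun i => i + 1) r]
    have h2 : ∀ n : ℕ, 2 * (∑ i ∈ Finset.range n, (i + 1)) = n * (n + 1) := by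
      intro n
      induction n with
      | zero => simp
      | succ n ih => rw [Finset.sum_range_succ, Nat.mul_add, ih]; ring
    rw [h1, ← h2 r, Nat.mul_div_cancel_left _ (by norm_num : 0 < 2)]
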